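/- Let f be smooth near x_i with f'(x_i) ≠ 0, and let β_0, β_1, β_2 be the smoothness indicators computed from f at the four-point stencil, τ_4 = (1/p)|β_4 - (2β_0-3β_1+5β_2)/4| with p > 0, and ω_k^{ZA} the Z-type weights with exponent q ≥ 1 and ε = 0. Then ω_k^{ZA} - d_k = O(Δx^{2q}) as Δx → 0, for each k = 0, 1, 2. -/

import Mathlib

open Asymptotics Filter

/-- Linear weights of the fourth-order central-upwind WENO scheme. -/
noncomputable def dWeight : Fin 3 → ℝ := ![1/6, 2/3, 1/6]

/-- Smoothness indicator of the whole 4-point stencil. -/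
noncomputable def beta4 (fm1 f0 f1 f2 : ℝ) : ℝ :=
  (1/9) * (fm1 - f0 - f1 + f2) ^ 2 +
    (44299/103680) * (fm1 - 3 * f0 + 3 * f1 - f2) ^ 2 +
    (31/57600) * (fm1 - 15 * f0 + 15 * f1 - f2) ^ 2 +
    (1/2304) * (13 * fm1 + 29 * f0 - 61 * f1 + 19 * f2) ^ 2 +
    (1/2304) * (61 * fm1 - 151 * f0 + 119 * f1 - 29 * f2) ^ 2 +
    (1/32400) * (41 * fm1 - 15 * f0 + 15 * f1 - 41 * f2) ^ 2

/-- Local smoothness indicators β₀, β₁, β₂ on the 4-point stencil. -/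
noncomputable def betaLoc (f : ℝ → ℝ) (xi Δx : ℝ) : Fin 3 → ℝ :=
  ![(f (xi - Δx) - f xi) ^ 2,
    (f xi - f (xi + Δx)) ^ 2,
    (1/3) * ((f (xi - Δx) - f xi) ^ 2 + (f xi - f (xi + Δx)) ^ 2 +
      (f (xi + Δx) - f (xi + 2 * Δx)) ^ 2)]

/-- Global smoothness indicator τ₄. -/
noncomputable def tau4 (p : ℝ) (f : ℝ → ℝ) (xi Δx : ℝ) : ℝ :=
  (1 / p) * |beta4 (f (xi - Δx)) (f xi) (f (xi + Δx)) (f (xi + 2 * Δx)) -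
    (2 * betaLoc f xi Δx 0 - 3 * betaLoc f xi Δx 1 + 5 * betaLoc f xi Δx 2) / 4|

/-- The Z-type (ZA) nonlinear weights with exponent `q` and ε = 0. -/
noncomputable def omegaZA (p q : ℝ) (f : ℝ → ℝ) (xi Δx : ℝ) (k : Fin 3) : ℝ :=
  (dWeight k * (1 + (tau4 p f xi Δx / betaLoc f xi Δx k) ^ q)) /
    (∑ s : Fin 3, dWeight s * (1 + (tau4 p f xi Δx / betaLoc f xi Δx s) ^ q))

/-- Mean value bootstrap: if `ψ 0 = 0` and `|ψ'| ≤ C t^n` on `[0,δ]`, then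
`|ψ h| ≤ C h^(n+1)` on `[0,δ]`. -/
lemma mvt_pow {ψ Ψ : ℝ → ℝ} {δ C : ℝ} (n : ℕ) (hC : 0 ≤ C)
    (hψ0 : ψ 0 = 0)
    (hd : ∀ t ∈ Set.Icc (0:ℝ) δ, HasDerivAt ψ (Ψ t) t)
    (hb : ∀ t ∈ Set.Icc (0:ℝ) δ, |Ψ t| ≤ C * t ^ n) :
    ∀ h ∈ Set.Icc (0:ℝ) δ, |ψ h| ≤ C * h ^ (n+1) := by
  intro h hh
  obtain ⟨hh0, hhδ⟩ := hh
  have hsub : Set.Icc (0:ℝ) h ⊆ Set.Icc 0 δ := Set.Icc_subset_Icc le_rfl hhδ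
  have key := Convex.norm_image_sub_le_of_norm_hasDerivWithin_le
    (f := ψ) (f' := Ψ) (s := Set.Icc 0 h) (C := C * h ^ n)
    (fun t ht => (hd t (hsub ht)).hasDerivWithinAt)
    (fun t ht => by
      rw [Real.norm_eq_abs]
      refine (hb t (hsub ht)).trans ?_
      exact mul_le_mul_of_nonneg_left (pow_le_pow_left₀ ht.1 ht.2 n) hC)
    (convex_Icc 0 h) (Set.left_mem_Icc.mpr hh0) (Set.right_mem_Icc.mpr hh0)
  rw [hψ0, sub_zero, sub_zero, Real.norm_eq_abs, Real.norm_eq_abs,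
    abs_of_nonneg hh0] at key
  calc |ψ h| ≤ C * h ^ n * h := key
    _ = C * h ^ (n+1) := by ring

lemma sq_lower {c h X : ℝ} (hc : 0 ≤ c) (hh : 0 ≤ h) (hX : c/2 * h ≤ |X|) :
    c^2/4 * h^2 ≤ X^2 := by
  have h1 : (c/2*h)^2 ≤ |X|^2 := pow_le_pow_left₀ (by positivity) hX 2
  rw [sq_abs] at h1
  calc c^2/4*h^2 = (c/2*h)^2 := by ring
    _ ≤ X^2 := h1

/-- Quadratic bound on the τ₄-numerator in difference form. -/
lemma quad_bound {b D3 P R M h : ℝ} (hM : 0 ≤ M) (h0 : 0 ≤ h)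
    (hb : |b| ≤ M * h ^ 1) (h3 : |D3| ≤ 12*M * h ^ 3)
    (hP : |P| ≤ 2*M * h ^ 2) (hR : |R| ≤ 6*M * h ^ 2) :
    |-(7/6)*(b*D3) + (109/80)*P^2 - (247/120)*(P*R) + (167/240)*R^2|
      ≤ 70*M^2*h^4 := by
  have hbd : |b| * |D3| ≤ (M * h ^ 1)*(12*M * h ^ 3) :=
    mul_le_mul hb h3 (abs_nonneg _) (by positivity)
  have hP2 : |P|^2 ≤ (2*M * h ^ 2)^2 := pow_le_pow_left₀ (abs_nonneg _) hP 2
  have hPR : |P| * |R| ≤ (2*M * h ^ 2)*(6*M * h ^ 2) :=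
    mul_le_mul hP hR (abs_nonneg _) (by positivity)
  have hR2 : |R|^2 ≤ (6*M * h ^ 2)^2 := pow_le_pow_left₀ (abs_nonneg _) hR 2
  have e1 : |(-(7/6:ℝ))*(b*D3)| = (7/6)*(|b| * |D3|) := by
    rw [abs_mul, abs_mul]; norm_num
  have e2 : |(109/80:ℝ)*P^2| = (109/80)*|P|^2 := by
    rw [abs_mul, abs_pow]; norm_num
  have e3 : |(247/120:ℝ)*(P*R)| = (247/120)*(|P| * |R|) := by
    rw [abs_mul, abs_mul]; norm_num
  have e4 : |(167/240:ℝ)*R^2| = (167/240)*|R|^2 := by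
    rw [abs_mul, abs_pow]; norm_num
  have a1 := abs_add_le ((-(7/6:ℝ))*(b*D3) + (109/80)*P^2 - (247/120)*(P*R))
    ((167/240)*R^2)
  have a2 := abs_sub ((-(7/6:ℝ))*(b*D3) + (109/80)*P^2) ((247/120)*(P*R))
  have a3 := abs_add_le ((-(7/6:ℝ))*(b*D3)) ((109/80)*P^2)
  have habs : |-(7/6)*(b*D3) + (109/80)*P^2 - (247/120)*(P*R) + (167/240)*R^2|
      ≤ (7/6)*(|b| * |D3|) + (109/80)*|P|^2 + (247/120)*(|P| * |R|)
        + (167/240)*|R|^2 := by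
    rw [e1] at a3; rw [e3] at a2; rw [e2] at a3; rw [e4] at a1
    linarith
  refine habs.trans ?_
  nlinarith [mul_nonneg (mul_nonneg hM hM) (pow_nonneg h0 4),
    abs_nonneg b, abs_nonneg D3, abs_nonneg P, abs_nonneg R]

set_option maxHeartbeats 1000000 in
theorem stmt_16 (f : ℝ → ℝ) (xi : ℝ) (hf : ContDiffAt ℝ (⊤ : ℕ∞) f xi)
    (hcrit : deriv f xi ≠ 0) (p q : ℝ) (hp : 0 < p) (hq : 1 ≤ q) :
    ∀ k : Fin 3, (fun Δx => omegaZA p q f xi Δx k - dWeight k)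
      =O[nhdsWithin (0:ℝ) (Set.Ioi 0)] (fun Δx : ℝ => Δx ^ (2 * q)) := by
  -- Step 1: local C³ structure
  obtain ⟨U₀, hU₀mem, hU₀⟩ := hf.contDiffOn (m := 3) (WithTop.coe_le_coe.mpr le_top) (by intro h; simp at h)
  set U := interior U₀ with hU_def
  have hUo : IsOpen U := isOpen_interior
  have hxiU : xi ∈ U := mem_interior_iff_mem_nhds.mpr hU₀mem
  have hcd : ContDiffOn ℝ 3 f U := hU₀.mono interior_subset
  set F1 := deriv f with hF1_def
  set F2 := deriv F1 with hF2_def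
  set F3 := deriv F2 with hF3_def
  have hcd1 : ContDiffOn ℝ 2 F1 U := hcd.deriv_of_isOpen hUo (by norm_cast)
  have hcd2 : ContDiffOn ℝ 1 F2 U := hcd1.deriv_of_isOpen hUo (by norm_cast)
  have hcd3 : ContDiffOn ℝ 0 F3 U := hcd2.deriv_of_isOpen hUo (by norm_cast)
  have hdf : ∀ t ∈ U, HasDerivAt f (F1 t) t := fun t ht =>
    ((hcd.differentiableOn (by norm_num) t ht).differentiableAt
      (hUo.mem_nhds ht)).hasDerivAt
  have hdF1 : ∀ t ∈ U, HasDerivAt F1 (F2 t) t := fun t ht =>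
    ((hcd1.differentiableOn (by norm_num) t ht).differentiableAt
      (hUo.mem_nhds ht)).hasDerivAt
  have hdF2 : ∀ t ∈ U, HasDerivAt F2 (F3 t) t := fun t ht =>
    ((hcd2.differentiableOn (by norm_num) t ht).differentiableAt
      (hUo.mem_nhds ht)).hasDerivAt
  -- Step 2: compact neighbourhood and bound M
  obtain ⟨ε, hε, hball⟩ := Metric.isOpen_iff.mp hUo xi hxiU
  set δ := ε/3 with hδ_def
  have hδ : 0 < δ := by positivity
  set K := Set.Icc (xi - 2*δ) (xi + 2*δ) with hK_def
  have hKU : K ⊆ U := by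
    intro x hx
    apply hball
    rw [Metric.mem_ball, Real.dist_eq]
    have h1 : |x - xi| ≤ 2*δ := abs_le.mpr ⟨by linarith [hx.1], by linarith [hx.2]⟩
    linarith
  have hmemK : ∀ t : ℝ, |t| ≤ 2*δ → xi + t ∈ K := by
    intro t ht
    rw [abs_le] at ht
    exact ⟨by linarith [ht.1], by linarith [ht.2]⟩
  obtain ⟨M1, hM1⟩ := (isCompact_Icc).exists_bound_of_continuousOn
    (hcd1.continuousOn.mono hKU)
  obtain ⟨M2, hM2⟩ := (isCompact_Icc).exists_bound_of_continuousOn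
    (hcd2.continuousOn.mono hKU)
  obtain ⟨M3, hM3⟩ := (isCompact_Icc).exists_bound_of_continuousOn
    (hcd3.continuousOn.mono hKU)
  set M := max M1 (max M2 (max M3 0)) with hM_def
  have hM0 : 0 ≤ M := le_max_of_le_right (le_max_of_le_right (le_max_right _ _))
  have hMF1 : ∀ x ∈ K, |F1 x| ≤ M := fun x hx =>
    (Real.norm_eq_abs _ ▸ hM1 x hx).trans (le_max_left _ _)
  have hMF2 : ∀ x ∈ K, |F2 x| ≤ M := fun x hx =>
    (Real.norm_eq_abs _ ▸ hM2 x hx).trans (le_max_of_le_right (le_max_left _ _))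
  have hMF3 : ∀ x ∈ K, |F3 x| ≤ M := fun x hx =>
    (Real.norm_eq_abs _ ▸ hM3 x hx).trans
      (le_max_of_le_right (le_max_of_le_right (le_max_left _ _)))
  have memm : ∀ t ∈ Set.Icc (0:ℝ) δ, xi - t ∈ K := by
    intro t ht; rw [sub_eq_add_neg]
    exact hmemK _ (by rw [abs_neg, abs_of_nonneg ht.1]; linarith [ht.2])
  have memp : ∀ t ∈ Set.Icc (0:ℝ) δ, xi + t ∈ K := fun t ht =>
    hmemK _ (by rw [abs_of_nonneg ht.1]; linarith [ht.2])
  have mem2 : ∀ t ∈ Set.Icc (0:ℝ) δ, xi + 2*t ∈ K := fun t ht =>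
    hmemK _ (by rw [abs_of_nonneg (by linarith [ht.1] : (0:ℝ) ≤ 2*t)]; linarith [ht.2])
  have memmU : ∀ t ∈ Set.Icc (0:ℝ) δ, xi - t ∈ U := fun t ht => hKU (memm t ht)
  have mempU : ∀ t ∈ Set.Icc (0:ℝ) δ, xi + t ∈ U := fun t ht => hKU (memp t ht)
  have mem2U : ∀ t ∈ Set.Icc (0:ℝ) δ, xi + 2*t ∈ U := fun t ht => hKU (mem2 t ht)
  -- derivative composition helpers
  have dcomp_p : ∀ (φ Φ : ℝ → ℝ), (∀ x ∈ U, HasDerivAt φ (Φ x) x) →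
      ∀ t ∈ Set.Icc (0:ℝ) δ, HasDerivAt (fun s => φ (xi + s)) (Φ (xi + t)) t := by
    intro φ Φ hφ t ht
    have h2 : HasDerivAt (fun s : ℝ => xi + s) 1 t := by
      simpa using (hasDerivAt_id t).const_add xi
    exact ((hφ _ (mempU t ht)).comp t h2).congr_deriv (by ring)
  have dcomp_m : ∀ (φ Φ : ℝ → ℝ), (∀ x ∈ U, HasDerivAt φ (Φ x) x) →
      ∀ t ∈ Set.Icc (0:ℝ) δ, HasDerivAt (fun s => φ (xi - s)) (-Φ (xi - t)) t := by
    intro φ Φ hφ t ht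
    have h2 : HasDerivAt (fun s : ℝ => xi - s) (-1) t := by
      simpa using (hasDerivAt_id t).const_sub xi
    exact ((hφ _ (memmU t ht)).comp t h2).congr_deriv (by ring)
  have dcomp_2 : ∀ (φ Φ : ℝ → ℝ), (∀ x ∈ U, HasDerivAt φ (Φ x) x) →
      ∀ t ∈ Set.Icc (0:ℝ) δ, HasDerivAt (fun s => φ (xi + 2*s)) (2 * Φ (xi + 2*t)) t := by
    intro φ Φ hφ t ht
    have h2 : HasDerivAt (fun s : ℝ => xi + 2*s) 2 t := by
      simpa using ((hasDerivAt_id t).const_mul 2).const_add xi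
    exact ((hφ _ (mem2U t ht)).comp t h2).congr_deriv (by ring)
  -- Step 3: the four difference bounds
  have Hb : ∀ h ∈ Set.Icc (0:ℝ) δ, |f xi - f (xi + h)| ≤ M * h ^ 1 :=
    mvt_pow (ψ := fun s => f xi - f (xi + s)) (Ψ := fun s => -F1 (xi + s)) 0 hM0
      (by simp)
      (fun t ht => (dcomp_p f F1 hdf t ht).const_sub (f xi))
      (fun t ht => by
        rw [abs_neg, pow_zero, mul_one]; exact hMF1 _ (memp t ht))
  have HPinner : ∀ t ∈ Set.Icc (0:ℝ) δ,
      |F1 (xi + t) - F1 (xi - t)| ≤ (2*M) * t ^ 1 :=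
    mvt_pow (ψ := fun s => F1 (xi + s) - F1 (xi - s))
      (Ψ := fun s => F2 (xi + s) + F2 (xi - s)) 0 (by positivity)
      (by simp)
      (fun t ht => by
        exact
          ((dcomp_p F1 F2 hdF1 t ht).sub (dcomp_m F1 F2 hdF1 t ht)).congr_deriv (by ring))
      (fun t ht => by
        rw [pow_zero, mul_one]
        refine (abs_add_le _ _).trans ?_
        have := hMF2 _ (memp t ht); have := hMF2 _ (memm t ht); linarith)
  have HP : ∀ h ∈ Set.Icc (0:ℝ) δ,
      |f (xi - h) - 2*f xi + f (xi + h)| ≤ (2*M) * h ^ 2 :=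
    mvt_pow (ψ := fun s => f (xi - s) - 2*f xi + f (xi + s))
      (Ψ := fun s => F1 (xi + s) - F1 (xi - s)) 1 (by positivity)
      (by simp only [sub_zero, add_zero]; ring)
      (fun t ht => by
        have h' := ((dcomp_m f F1 hdf t ht).sub_const (2*f xi)).add
          (dcomp_p f F1 hdf t ht)
        exact h'.congr_deriv (by ring))
      (fun t ht => HPinner t ht)
  have HRinner : ∀ t ∈ Set.Icc (0:ℝ) δ,
      |2*F1 (xi + 2*t) - 2*F1 (xi + t)| ≤ (6*M) * t ^ 1 :=
    mvt_pow (ψ := fun s => 2*F1 (xi + 2*s) - 2*F1 (xi + s))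
      (Ψ := fun s => 2*(2*F2 (xi + 2*s)) - 2*F2 (xi + s)) 0 (by positivity)
      (by norm_num)
      (fun t ht =>
        ((dcomp_2 F1 F2 hdF1 t ht).const_mul 2).sub
          ((dcomp_p F1 F2 hdF1 t ht).const_mul 2))
      (fun t ht => by
        rw [pow_zero, mul_one]
        have t1 : |2*(2*F2 (xi + 2*t)) - 2*F2 (xi + t)|
            ≤ |2*(2*F2 (xi + 2*t))| + |2*F2 (xi + t)| := abs_sub _ _
        have t2 : |(2:ℝ)*(2*F2 (xi + 2*t))| = 4*|F2 (xi + 2*t)| := by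
          rw [abs_mul, abs_mul]; norm_num; ring
        have t3 : |(2:ℝ)*F2 (xi + t)| = 2*|F2 (xi + t)| := by
          rw [abs_mul]; norm_num
        have := hMF2 _ (mem2 t ht); have := hMF2 _ (memp t ht)
        rw [t2, t3] at t1; linarith)
  have HR : ∀ h ∈ Set.Icc (0:ℝ) δ,
      |f xi - 2*f (xi + h) + f (xi + 2*h)| ≤ (6*M) * h ^ 2 :=
    mvt_pow (ψ := fun s => f xi - 2*f (xi + s) + f (xi + 2*s))
      (Ψ := fun s => 2*F1 (xi + 2*s) - 2*F1 (xi + s)) 1 (by positivity)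
      (by simp only [add_zero, mul_zero]; ring)
      (fun t ht => by
        have h' := (((dcomp_p f F1 hdf t ht).const_mul 2).const_sub (f xi)).add
          (dcomp_2 f F1 hdf t ht)
        exact h'.congr_deriv (by ring))
      (fun t ht => HRinner t ht)
  have H3a : ∀ t ∈ Set.Icc (0:ℝ) δ,
      |F2 (xi - t) + 3*F2 (xi + t) - 4*F2 (xi + 2*t)| ≤ (12*M) * t ^ 1 :=
    mvt_pow (ψ := fun s => F2 (xi - s) + 3*F2 (xi + s) - 4*F2 (xi + 2*s))
      (Ψ := fun s => -F3 (xi - s) + 3*F3 (xi + s) - 4*(2*F3 (xi + 2*s)))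
      0 (by positivity)
      (by simp only [sub_zero, add_zero, mul_zero]; ring)
      (fun t ht =>
        ((dcomp_m F2 F3 hdF2 t ht).add
          ((dcomp_p F2 F3 hdF2 t ht).const_mul 3)).sub
          ((dcomp_2 F2 F3 hdF2 t ht).const_mul 4))
      (fun t ht => by
        rw [pow_zero, mul_one]
        have t1 : |(-F3 (xi - t) + 3*F3 (xi + t)) - 4*(2*F3 (xi + 2*t))|
            ≤ |(-F3 (xi - t) + 3*F3 (xi + t))| + |4*(2*F3 (xi + 2*t))| := abs_sub _ _
        have t2 : |(-F3 (xi - t) + 3*F3 (xi + t))|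
            ≤ |F3 (xi - t)| + 3*|F3 (xi + t)| := by
          refine (abs_add_le _ _).trans ?_
          rw [abs_neg, abs_mul]; norm_num
        have t3 : |(4:ℝ)*(2*F3 (xi + 2*t))| = 8*|F3 (xi + 2*t)| := by
          rw [abs_mul, abs_mul]; norm_num; ring
        have := hMF3 _ (memm t ht); have := hMF3 _ (memp t ht)
        have := hMF3 _ (mem2 t ht)
        rw [t3] at t1; linarith)
  have H3b : ∀ t ∈ Set.Icc (0:ℝ) δ,
      |-F1 (xi - t) + 3*F1 (xi + t) - 2*F1 (xi + 2*t)| ≤ (12*M) * t ^ 2 :=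
    mvt_pow (ψ := fun s => -F1 (xi - s) + 3*F1 (xi + s) - 2*F1 (xi + 2*s))
      (Ψ := fun s => F2 (xi - s) + 3*F2 (xi + s) - 4*F2 (xi + 2*s))
      1 (by positivity)
      (by simp only [sub_zero, add_zero, mul_zero]; ring)
      (fun t ht => by
        have h' := (((dcomp_m F1 F2 hdF1 t ht).neg).add
          ((dcomp_p F1 F2 hdF1 t ht).const_mul 3)).sub
          ((dcomp_2 F1 F2 hdF1 t ht).const_mul 2)
        have e : (- -F2 (xi - t) + 3*F2 (xi + t)) - 2*(2*F2 (xi + 2*t))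
            = F2 (xi - t) + 3*F2 (xi + t) - 4*F2 (xi + 2*t) := by ring
        rw [e] at h'
        exact h')
      (fun t ht => H3a t ht)
  have H3 : ∀ h ∈ Set.Icc (0:ℝ) δ,
      |f (xi - h) - 3*f xi + 3*f (xi + h) - f (xi + 2*h)| ≤ (12*M) * h ^ 3 :=
    mvt_pow (ψ := fun s => f (xi - s) - 3*f xi + 3*f (xi + s) - f (xi + 2*s))
      (Ψ := fun s => -F1 (xi - s) + 3*F1 (xi + s) - 2*F1 (xi + 2*s))
      2 (by positivity)
      (by simp only [sub_zero, add_zero, mul_zero]; ring)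
      (fun t ht =>
        (((dcomp_m f F1 hdf t ht).sub_const (3*f xi)).add
          ((dcomp_p f F1 hdf t ht).const_mul 3)).sub
          (dcomp_2 f F1 hdf t ht))
      (fun t ht => H3b t ht)
  -- Step 4: τ₄ bound
  have Htau : ∀ h ∈ Set.Icc (0:ℝ) δ,
      tau4 p f xi h ≤ (1/p) * (70*M^2*h^4) := by
    intro h hh
    have e : beta4 (f (xi - h)) (f xi) (f (xi + h)) (f (xi + 2*h)) -
        (2 * betaLoc f xi h 0 - 3 * betaLoc f xi h 1 + 5 * betaLoc f xi h 2) / 4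
        = -(7/6)*((f xi - f (xi + h)) *
            (f (xi - h) - 3*f xi + 3*f (xi + h) - f (xi + 2*h)))
          + (109/80)*(f (xi - h) - 2*f xi + f (xi + h))^2
          - (247/120)*((f (xi - h) - 2*f xi + f (xi + h)) *
            (f xi - 2*f (xi + h) + f (xi + 2*h)))
          + (167/240)*(f xi - 2*f (xi + h) + f (xi + 2*h))^2 := by
      show beta4 (f (xi - h)) (f xi) (f (xi + h)) (f (xi + 2*h)) -
        (2 * (f (xi - h) - f xi)^2 - 3 * (f xi - f (xi + h))^2 +
          5 * ((1/3) * ((f (xi - h) - f xi)^2 + (f xi - f (xi + h))^2 +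
            (f (xi + h) - f (xi + 2*h))^2))) / 4 = _
      simp only [beta4]; ring
    have key := quad_bound (b := f xi - f (xi + h))
      (D3 := f (xi - h) - 3*f xi + 3*f (xi + h) - f (xi + 2*h))
      (P := f (xi - h) - 2*f xi + f (xi + h))
      (R := f xi - 2*f (xi + h) + f (xi + 2*h)) (M := M) (h := h)
      hM0 hh.1 (Hb h hh) (H3 h hh) (HP h hh) (HR h hh)
    simp only [tau4]
    rw [e]
    exact mul_le_mul_of_nonneg_left key (one_div_pos.mpr hp).le
  -- Step 5: first-order lower bounds from differentiability
  have hd0 : HasDerivAt f (F1 xi) xi := hdf xi hxiU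
  have hlo := hasDerivAt_iff_isLittleO.mp hd0
  have hcpos : 0 < |F1 xi| := abs_pos.mpr hcrit
  have hev := isLittleO_iff.mp hlo (show (0:ℝ) < |F1 xi|/2 by positivity)
  have tends_p : Tendsto (fun h : ℝ => xi + h) (nhds 0) (nhds xi) := by
    simpa using (continuous_const_add xi).tendsto (0:ℝ)
  have tends_m : Tendsto (fun h : ℝ => xi - h) (nhds 0) (nhds xi) := by
    simpa using (continuous_sub_left xi).tendsto (0:ℝ)
  have evp : ∀ᶠ h in nhds (0:ℝ),
      |f (xi + h) - f xi - h * F1 xi| ≤ |F1 xi|/2 * |h| := by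
    filter_upwards [tends_p.eventually hev] with h hh
    simpa [Real.norm_eq_abs, smul_eq_mul, add_sub_cancel_left] using hh
  have evm : ∀ᶠ h in nhds (0:ℝ),
      |f (xi - h) - f xi + h * F1 xi| ≤ |F1 xi|/2 * |h| := by
    filter_upwards [tends_m.eventually hev] with h hh
    have e1 : xi - h - xi = -h := by ring
    rw [e1] at hh
    simpa [Real.norm_eq_abs, smul_eq_mul, neg_mul, sub_neg_eq_add,
      ← sub_eq_add_neg] using hh
  -- Step 6: assembly
  set c0 : ℝ := (F1 xi)^2/12 with hc0_def
  have hc0 : 0 < c0 := by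
    rw [hc0_def]
    have : 0 < (F1 xi)^2 := by positivity
    linarith
  set C1 : ℝ := ((1/p) * (70*M^2)) / c0 with hC1_def
  have hC1nn : 0 ≤ C1 := by
    rw [hC1_def]
    exact div_nonneg (mul_nonneg (one_div_pos.mpr hp).le (by positivity)) hc0.le
  intro k
  rw [isBigO_iff]
  refine ⟨C1^q, ?_⟩
  filter_upwards [Ioc_mem_nhdsGT_of_mem (Set.mem_Ico.mpr ⟨le_rfl, hδ⟩),
    nhdsWithin_le_nhds (evp.and evm)] with h hIoc hev2
  obtain ⟨h0, hδ'⟩ := hIoc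
  obtain ⟨hevp, hevm⟩ := hev2
  have hhIcc : h ∈ Set.Icc (0:ℝ) δ := ⟨h0.le, hδ'⟩
  have habsh : |h| = h := abs_of_pos h0
  -- lower bounds on the first differences
  have hBlow : |F1 xi|/2 * h ≤ |f xi - f (xi + h)| := by
    have t1 := abs_sub_abs_le_abs_sub (h * F1 xi) (f (xi + h) - f xi)
    have t2 : |h * F1 xi - (f (xi + h) - f xi)| = |f (xi + h) - f xi - h * F1 xi| :=
      abs_sub_comm _ _
    have t3 : |h * F1 xi| = |F1 xi| * h := by
      rw [abs_mul, habsh]; ring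
    rw [habsh] at hevp
    rw [abs_sub_comm (f xi)]
    rw [t2, t3] at t1
    linarith
  have hAlow : |F1 xi|/2 * h ≤ |f (xi - h) - f xi| := by
    have t1 := abs_sub_abs_le_abs_sub (h * F1 xi) (-(f (xi - h) - f xi))
    have t2 : |h * F1 xi - -(f (xi - h) - f xi)| = |f (xi - h) - f xi + h * F1 xi| := by
      rw [show h * F1 xi - -(f (xi - h) - f xi) = f (xi - h) - f xi + h * F1 xi from by ring]
    have t3 : |h * F1 xi| = |F1 xi| * h := by
      rw [abs_mul, habsh]; ring
    rw [habsh] at hevm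
    rw [t2, t3, abs_neg] at t1
    linarith
  have hA4 : (F1 xi)^2/4 * h^2 ≤ (f (xi - h) - f xi)^2 := by
    have := sq_lower (abs_nonneg (F1 xi)) h0.le hAlow
    rwa [sq_abs] at this
  have hB4 : (F1 xi)^2/4 * h^2 ≤ (f xi - f (xi + h))^2 := by
    have := sq_lower (abs_nonneg (F1 xi)) h0.le hBlow
    rwa [sq_abs] at this
  have hZ : (0:ℝ) ≤ (F1 xi)^2/12 * h^2 := by positivity
  have hE : (F1 xi)^2/4 * h^2 = 3*((F1 xi)^2/12 * h^2) := by ring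
  have hβ : ∀ s : Fin 3, c0 * h^2 ≤ betaLoc f xi h s := by
    intro s
    fin_cases s
    · show c0 * h^2 ≤ (f (xi - h) - f xi)^2
      rw [hc0_def]
      linarith only [hA4, hZ, hE]
    · show c0 * h^2 ≤ (f xi - f (xi + h))^2
      rw [hc0_def]
      linarith only [hB4, hZ, hE]
    · show c0 * h^2 ≤ (1/3) * ((f (xi - h) - f xi)^2 + (f xi - f (xi + h))^2 +
        (f (xi + h) - f (xi + 2*h))^2)
      rw [hc0_def]
      linarith only [hB4, hE, hZ, sq_nonneg (f (xi + h) - f (xi + 2*h)),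
        sq_nonneg (f (xi - h) - f xi)]
  have hβpos : ∀ s : Fin 3, 0 < betaLoc f xi h s := fun s =>
    lt_of_lt_of_le (mul_pos hc0 (pow_pos h0 2)) (hβ s)
  have htau := Htau h hhIcc
  have htau0 : 0 ≤ tau4 p f xi h := by
    simp only [tau4]
    exact mul_nonneg (one_div_pos.mpr hp).le (abs_nonneg _)
  have hratio : ∀ s : Fin 3, tau4 p f xi h / betaLoc f xi h s ≤ C1 * h^2 := by
    intro s
    have hd2 : (0:ℝ) < c0 * h^2 := mul_pos hc0 (pow_pos h0 2)
    calc tau4 p f xi h / betaLoc f xi h s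
        ≤ ((1/p) * (70*M^2*h^4)) / (c0 * h^2) := by
          apply div_le_div₀ (mul_nonneg (one_div_pos.mpr hp).le (by positivity)) htau hd2 (hβ s)
      _ = C1 * h^2 := by
          rw [hC1_def]
          field_simp
  have hrq : ∀ s : Fin 3, (tau4 p f xi h / betaLoc f xi h s)^q ≤ C1^q * h^(2*q) := by
    intro s
    have h1 : (tau4 p f xi h / betaLoc f xi h s)^q ≤ (C1 * h^2)^q :=
      Real.rpow_le_rpow (div_nonneg htau0 (hβpos s).le) (hratio s) (by linarith)
    have h2 : (C1 * h^2)^q = C1^q * h^(2*q) := by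
      rw [Real.mul_rpow hC1nn (by positivity)]
      congr 1
      rw [← Real.rpow_natCast h 2, ← Real.rpow_mul h0.le]
      norm_num
    rw [h2] at h1
    exact h1
  have hr0 : ∀ s : Fin 3, 0 ≤ (tau4 p f xi h / betaLoc f xi h s)^q := fun s =>
    Real.rpow_nonneg (div_nonneg htau0 (hβpos s).le) q
  -- final algebra
  have hsum : (∑ s : Fin 3, dWeight s * (1 + (tau4 p f xi h / betaLoc f xi h s)^q))
      = 1 + (1/6*(tau4 p f xi h / betaLoc f xi h 0)^q
        + 2/3*(tau4 p f xi h / betaLoc f xi h 1)^q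
        + 1/6*(tau4 p f xi h / betaLoc f xi h 2)^q) := by
    rw [Fin.sum_univ_three]
    show (1/6 : ℝ) * _ + (2/3 : ℝ) * _ + (1/6 : ℝ) * _ = _
    ring
  set S : ℝ := 1/6*(tau4 p f xi h / betaLoc f xi h 0)^q
    + 2/3*(tau4 p f xi h / betaLoc f xi h 1)^q
    + 1/6*(tau4 p f xi h / betaLoc f xi h 2)^q with hS_def
  have hS0 : 0 ≤ S := by
    rw [hS_def]
    have := hr0 0; have := hr0 1; have := hr0 2
    linarith
  have hSle : S ≤ C1^q * h^(2*q) := by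
    rw [hS_def]
    have := hrq 0; have := hrq 1; have := hrq 2
    have := hr0 0; have := hr0 1; have := hr0 2
    linarith
  clear_value S
  have hω : omegaZA p q f xi h k - dWeight k
      = dWeight k * ((tau4 p f xi h / betaLoc f xi h k)^q - S) / (1 + S) := by
    have h1S : (1:ℝ) + S ≠ 0 := by linarith
    simp only [omegaZA]
    rw [hsum]
    field_simp
    ring
  rw [hω, Real.norm_eq_abs, Real.norm_eq_abs, abs_div, abs_mul]
  have hden : |1 + S| = 1 + S := abs_of_pos (by linarith)
  rw [hden]
  have hdk : |dWeight k| ≤ 1 := by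
    fin_cases k <;> norm_num [dWeight, abs_le]
  have hRkS : |(tau4 p f xi h / betaLoc f xi h k)^q - S| ≤ C1^q * h^(2*q) := by
    have h1 := hrq k; have h2 := hr0 k
    exact abs_le.mpr ⟨by linarith, by linarith⟩
  have hnorm : |h^(2*q)| = h^(2*q) := abs_of_nonneg (Real.rpow_nonneg h0.le _)
  rw [hnorm]
  calc |dWeight k| * |(tau4 p f xi h / betaLoc f xi h k)^q - S| / (1 + S)
      ≤ |dWeight k| * |(tau4 p f xi h / betaLoc f xi h k)^q - S| :=
        div_le_self (by positivity) (by linarith)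
    _ ≤ 1 * (C1^q * h^(2*q)) :=
        mul_le_mul hdk hRkS (abs_nonneg _) zero_le_one
    _ = C1^q * h^(2*q) := one_mul _
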